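/- arXiv:1612.09391 — 4 statements merged into one kernel-verified Lean document; each statement's English description precedes it below -/
import Mathlib

section
/- Let M be a nonzero indecomposable generalized weight I₁-module whose support is contained in ℕ (i.e., every λ ∈ K with M^λ ≠ 0 is a natural number). Then FM = M. -/
open Polynomial

set_option synthInstance.maxHeartbeats 1000000
set_option maxHeartbeats 1000000

/-- Multiplication by `x` on `K[x]`. -/
noncomputable def xOp (K : Type) [Field K] : Module.End K (Polynomial K) :=
  LinearMap.mulLeft K (X : Polynomial K)

/-- Formal derivative `d/dx` on `K[x]`. -/
noncomputable def derOp (K : Type) [Field K] : Module.End K (Polynomial K) :=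
  Polynomial.derivative

/-- Integration on `K[x]`: determined by `x^n ↦ x^(n+1)/(n+1)`. -/
noncomputable def intOp (K : Type) [Field K] [CharZero K] : Module.End K (Polynomial K) :=
  Polynomial.lsum fun n => (((n : K) + 1)⁻¹) • (Polynomial.monomial (n + 1) : K →ₗ[K] Polynomial K)

/-- The algebra `I₁ = K⟨x, d/dx, ∫⟩` of polynomial integro-differential operators. -/
noncomputable def I1 (K : Type) [Field K] [CharZero K] :
    Subalgebra K (Module.End K (Polynomial K)) :=
  Algebra.adjoin K {xOp K, derOp K, intOp K}

noncomputable instance I1.instRing (K : Type) [Field K] [CharZero K] : Ring (I1 K) :=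
  inferInstance
noncomputable instance I1.instAlgebra (K : Type) [Field K] [CharZero K] : Algebra K (I1 K) :=
  inferInstance
noncomputable instance I1.instAddCommGroup (K : Type) [Field K] [CharZero K] :
    AddCommGroup (I1 K) := inferInstance
noncomputable instance I1.instModuleK (K : Type) [Field K] [CharZero K] : Module K (I1 K) :=
  inferInstance

/-- `K[x]` is an `I₁`-module via the inclusion `I₁ ⊆ End_K(K[x])`. -/
noncomputable instance I1.instModulePoly (K : Type) [Field K] [CharZero K] :
    Module (I1 K) (Polynomial K) :=
  Module.compHom (Polynomial K) (Subalgebra.val (I1 K)).toRingHom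

instance I1.instTowerPoly (K : Type) [Field K] [CharZero K] :
    IsScalarTower K (I1 K) (Polynomial K) :=
  ⟨fun c a p => by
    show ((c • a : I1 K) : Module.End K (Polynomial K)) p
        = c • ((a : Module.End K (Polynomial K)) p)
    simp⟩

/-- The element `H = ∂x` of `I₁`. -/
noncomputable def Hop (K : Type) [Field K] [CharZero K] : I1 K :=
  ⟨derOp K * xOp K,
    mul_mem (Algebra.subset_adjoin (by simp)) (Algebra.subset_adjoin (by simp))⟩

/-- The element `1 - ∫∂` of `I₁`. -/
noncomputable def eElt (K : Type) [Field K] [CharZero K] : I1 K :=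
  1 - (⟨intOp K, Algebra.subset_adjoin (by simp)⟩ : I1 K) *
      (⟨derOp K, Algebra.subset_adjoin (by simp)⟩ : I1 K)

/-- The two-sided ideal `F` of `I₁` generated by `1 - ∫∂`, regarded as a left ideal. -/
noncomputable def Fideal (K : Type) [Field K] [CharZero K] : Ideal (I1 K) :=
  Ideal.span {y | ∃ a b : I1 K, y = a * eElt K * b}

/-- The left ideal `F + I₁(H-λ)^n` of `I₁`. -/
noncomputable def Msub (K : Type) [Field K] [CharZero K] (n : ℕ) (lam : K) : Ideal (I1 K) :=
  Fideal K ⊔ Ideal.span {(Hop K - algebraMap K (I1 K) lam) ^ n}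

/-- The left `I₁`-module `M(n,λ) = I₁/(F + I₁(H-λ)^n)`. -/
abbrev Mmod (K : Type) [Field K] [CharZero K] (n : ℕ) (lam : K) :=
  I1 K ⧸ Msub K n lam

section Weight

variable (K : Type) [Field K] [CharZero K]
variable (M : Type) [AddCommGroup M] [Module K M] [Module (I1 K) M] [IsScalarTower K (I1 K) M]

noncomputable instance : SMulCommClass (I1 K) K M := SMulCommClass.symm K (I1 K) M

/-- The generalized weight space `M^λ = {m ∈ M : (H-λ)^k m = 0 for some k}`. -/
noncomputable def genWeightSpace (lam : K) : Submodule K M :=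
  ⨆ k : ℕ,
    LinearMap.ker (DistribMulAction.toLinearMap K M ((Hop K - algebraMap K (I1 K) lam) ^ k))

/-- `M` is a generalized weight module if `M = ⊕_{λ∈K} M^λ`. -/
def IsGenWeightModule : Prop :=
  letI := Classical.decEq K
  DirectSum.IsInternal fun lam : K => genWeightSpace K M lam

/-- The support of `M`: the set of `λ ∈ K` with `M^λ ≠ 0`. -/
noncomputable def suppSet : Set K := {lam : K | genWeightSpace K M lam ≠ ⊥}

end Weight

section Mod

variable (K : Type) [Field K] [CharZero K]
variable (M : Type) [AddCommGroup M] [Module (I1 K) M]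

/-- `M` is indecomposable: it is not the direct sum of two nonzero submodules. -/
def IsIndecomposableMod : Prop :=
  ¬ ∃ N₁ N₂ : Submodule (I1 K) M, N₁ ≠ ⊥ ∧ N₂ ≠ ⊥ ∧ IsCompl N₁ N₂

/-- The submodule `FM` of `M`. -/
noncomputable def FMsub : Submodule (I1 K) M :=
  Submodule.span (I1 K) {m : M | ∃ f ∈ Fideal K, ∃ x : M, m = f • x}

/-- `M` has length `n`: there is a composition series `⊥ = M₀ ⋖ ⋯ ⋖ Mₙ = ⊤`. -/
def HasLength (n : ℕ) : Prop :=
  ∃ s : CompositionSeries (Submodule (I1 K) M), s.head = ⊥ ∧ s.last = ⊤ ∧ s.length = n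

end Mod

/-!
Since `∫∂ = 1 - (1 - ∫∂)`, the derivative `∂` is injective on `M / FM`, and since `∂H = (H + 1)∂`
it maps the generalized weight space `M^λ` into `M^(λ-1)`. Hence `M^(λ-1) ⊆ FM` forces
`M^λ ⊆ FM`. As `-1` lies outside the support, `M^(-1) = 0`, so by induction `M^n ⊆ FM` for every
`n ∈ ℕ`; all other weight spaces vanish, and `M` is the sum of its weight spaces.
-/

namespace I1

lemma derOp_mul_xOp (K : Type) [Field K] : derOp K * xOp K = xOp K * derOp K + 1 := by
  refine LinearMap.ext fun p => ?_
  simp [derOp, xOp, Polynomial.derivative_mul, add_comm]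

variable (K : Type) [Field K] [CharZero K]

noncomputable def derElt : I1 K := ⟨derOp K, Algebra.subset_adjoin (by simp)⟩

noncomputable def intElt : I1 K := ⟨intOp K, Algebra.subset_adjoin (by simp)⟩

lemma intElt_mul_derElt : intElt K * derElt K = 1 - eElt K :=
  (sub_sub_cancel 1 _).symm

lemma derElt_mul_Hop : derElt K * Hop K = Hop K * derElt K + derElt K := by
  apply Subtype.ext
  show derOp K * (derOp K * xOp K) = derOp K * xOp K * derOp K + derOp K
  conv_lhs => rw [derOp_mul_xOp]
  noncomm_ring

lemma derElt_mul_Hop_sub (lam : K) :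
    derElt K * (Hop K - algebraMap K (I1 K) lam)
      = (Hop K - algebraMap K (I1 K) (lam - 1)) * derElt K := by
  rw [mul_sub, derElt_mul_Hop, ← Algebra.commutes, map_sub, map_one]
  noncomm_ring

lemma derElt_mul_Hop_sub_pow (lam : K) (k : ℕ) :
    derElt K * (Hop K - algebraMap K (I1 K) lam) ^ k
      = (Hop K - algebraMap K (I1 K) (lam - 1)) ^ k * derElt K := by
  induction k with
  | zero => simp
  | succ k ih =>
    rw [pow_succ, pow_succ, ← mul_assoc, ih, mul_assoc, derElt_mul_Hop_sub, ← mul_assoc]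

end I1

open I1

section Weight

variable {K : Type} [Field K] [CharZero K]
variable {M : Type} [AddCommGroup M] [Module K M] [Module (I1 K) M] [IsScalarTower K (I1 K) M]

lemma mem_genWeightSpace_iff {lam : K} {m : M} :
    m ∈ genWeightSpace K M lam ↔ ∃ k : ℕ, ((Hop K - algebraMap K (I1 K) lam) ^ k) • m = 0 := by
  have hmono : Monotone fun k : ℕ => LinearMap.ker
      (DistribMulAction.toLinearMap K M ((Hop K - algebraMap K (I1 K) lam) ^ k)) := by
    refine monotone_nat_of_le_succ fun k x hx => ?_
    change ((Hop K - algebraMap K (I1 K) lam) ^ k) • x = 0 at hx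
    change ((Hop K - algebraMap K (I1 K) lam) ^ (k + 1)) • x = 0
    rw [pow_succ', mul_smul, hx, smul_zero]
  simp only [genWeightSpace, Submodule.mem_iSup_of_directed _ hmono.directed_le,
    LinearMap.mem_ker]
  rfl

lemma derElt_smul_mem_genWeightSpace {lam : K} {m : M} (hm : m ∈ genWeightSpace K M lam) :
    derElt K • m ∈ genWeightSpace K M (lam - 1) := by
  obtain ⟨k, hk⟩ := mem_genWeightSpace_iff.mp hm
  exact mem_genWeightSpace_iff.mpr
    ⟨k, by rw [← mul_smul, ← derElt_mul_Hop_sub_pow, mul_smul, hk, smul_zero]⟩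

end Weight

section FM

variable {K : Type} [Field K] [CharZero K] {M : Type} [AddCommGroup M] [Module (I1 K) M]

lemma eElt_smul_mem_FMsub (m : M) : eElt K • m ∈ FMsub K M :=
  Submodule.subset_span ⟨eElt K, Ideal.subset_span ⟨1, 1, by simp⟩, m, rfl⟩

lemma mem_FMsub_of_derElt_smul_mem {m : M} (h : derElt K • m ∈ FMsub K M) : m ∈ FMsub K M := by
  have hm : m = intElt K • derElt K • m + eElt K • m := by
    rw [← mul_smul, intElt_mul_derElt, sub_smul, one_smul, sub_add_cancel]
  rw [hm]
  exact add_mem (Submodule.smul_mem _ _ h) (eElt_smul_mem_FMsub m)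

end FM

section Support

variable {K : Type} [Field K] [CharZero K]
variable {M : Type} [AddCommGroup M] [Module K M] [Module (I1 K) M] [IsScalarTower K (I1 K) M]

lemma genWeightSpace_le_FMsub_of_sub_one {lam : K}
    (h : genWeightSpace K M (lam - 1) ≤ (FMsub K M).restrictScalars K) :
    genWeightSpace K M lam ≤ (FMsub K M).restrictScalars K := fun _ hm =>
  mem_FMsub_of_derElt_smul_mem (h (derElt_smul_mem_genWeightSpace hm))

lemma genWeightSpace_natCast_le_FMsub (hbot : genWeightSpace K M (-1) = ⊥) (n : ℕ) :
    genWeightSpace K M n ≤ (FMsub K M).restrictScalars K := by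
  induction n with
  | zero => exact genWeightSpace_le_FMsub_of_sub_one (by simp [hbot])
  | succ n ih => exact genWeightSpace_le_FMsub_of_sub_one (by simpa using ih)

end Support

theorem stmt_6_general (K : Type) [Field K] [CharZero K]
    (M : Type) [AddCommGroup M] [Module K M] [Module (I1 K) M] [IsScalarTower K (I1 K) M]
    (hgw : IsGenWeightModule K M)
    (hsupp : ∀ lam ∈ suppSet K M, ∃ k : ℕ, lam = (k : K)) :
    FMsub K M = ⊤ := by
  have hbot : genWeightSpace K M (-1) = ⊥ := by
    by_contra hne
    obtain ⟨j, hj⟩ := hsupp (-1) hne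
    exact Nat.cast_add_one_ne_zero j (by rw [← hj]; ring)
  have hle (lam : K) : genWeightSpace K M lam ≤ (FMsub K M).restrictScalars K := by
    by_cases hlam : lam ∈ suppSet K M
    · obtain ⟨n, rfl⟩ := hsupp lam hlam
      exact genWeightSpace_natCast_le_FMsub hbot n
    · rw [show genWeightSpace K M lam = ⊥ from not_not.mp hlam]
      exact bot_le
  classical
  have htop := hgw.submodule_iSup_eq_top
  rw [← Submodule.restrictScalars_eq_top_iff K, eq_top_iff, ← htop]
  exact iSup_le hle

/-- Let `M` be a nonzero indecomposable generalized weight `I₁`-module whose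
support is contained in `ℕ`. Then `FM = M`. -/
theorem stmt_6 (K : Type) [Field K] [CharZero K]
    (M : Type) [AddCommGroup M] [Module K M] [Module (I1 K) M] [IsScalarTower K (I1 K) M]
    [Nontrivial M]
    (hind : IsIndecomposableMod K M) (hgw : IsGenWeightModule K M)
    (hsupp : ∀ lam ∈ suppSet K M, ∃ k : ℕ, lam = (k : K)) :
    FMsub K M = ⊤ :=
  stmt_6_general K M hgw hsupp
end

section
/- For every integer n ≥ 1 and every λ ∈ K, Hom_{I₁}(M(n,λ), K[x]) = 0, i.e., the only I₁-module homomorphism from M(n,λ) to K[x] is the zero map. -/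
open Polynomial

set_option synthInstance.maxHeartbeats 1000000
set_option maxHeartbeats 1000000

/-
The image `p` of the generator `1 + (F + I₁(H-λ)^n)` under a homomorphism
`M(n,λ) → K[x]` is killed by `F`. But `1 - ∫∂` sends a polynomial to its constant term, so
`(1 - ∫∂)∂^j` sends `p` to `j!` times its `j`-th coefficient; hence `p = 0`, and a homomorphism
out of a cyclic module vanishing on the generator is zero.
-/

theorem Submodule.smul_apply_mkQ_one_eq_zero {R M : Type*} [Ring R] [AddCommGroup M]
    [Module R M] {I : Submodule R R} (f : (R ⧸ I) →ₗ[R] M) {r : R} (hr : r ∈ I) :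
    r • f (I.mkQ 1) = 0 := by
  rw [← map_smul, ← map_smul, smul_eq_mul, mul_one, I.mkQ_apply,
    (Submodule.Quotient.mk_eq_zero I).2 hr, map_zero]

theorem Submodule.linearMap_eq_zero_of_apply_mkQ_one {R M : Type*} [Ring R] [AddCommGroup M]
    [Module R M] {I : Submodule R R} {f : (R ⧸ I) →ₗ[R] M} (h : f (I.mkQ 1) = 0) : f = 0 :=
  Submodule.linearMap_qext _ <| LinearMap.ext_ring <| by simpa using h

section IntegroDifferential

variable {K : Type} [Field K] [CharZero K]

theorem intOp_derivative (q : K[X]) : intOp K (derivative q) = q - C (q.coeff 0) := by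
  induction q using Polynomial.induction_on' with
  | add r s hr hs => rw [derivative_add, map_add, hr, hs, coeff_add, C_add]; ring
  | monomial m a =>
    cases m with
    | zero => simp [intOp]
    | succ m =>
      have hm : (m : K) + 1 ≠ 0 := Nat.cast_add_one_ne_zero m
      rw [derivative_monomial, coeff_monomial, if_neg m.succ_ne_zero, map_zero, sub_zero]
      simp only [intOp, lsum_apply, LinearMap.smul_apply]
      rw [sum_monomial_index _ _ (by simp), Nat.add_sub_cancel, smul_monomial, smul_eq_mul]
      congr 1
      push_cast
      field_simp

variable (K) in
noncomputable def derElt : I1 K := ⟨derOp K, Algebra.subset_adjoin (by simp)⟩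

theorem I1.smul_def (a : I1 K) (q : K[X]) : a • q = (a : Module.End K K[X]) q := rfl

theorem derElt_pow_smul (j : ℕ) (q : K[X]) : derElt K ^ j • q = derivative^[j] q := by
  rw [I1.smul_def, SubmonoidClass.coe_pow, Module.End.pow_apply]
  rfl

theorem eElt_smul (q : K[X]) : eElt K • q = C (q.coeff 0) := by
  change q - intOp K (derivative q) = _
  rw [intOp_derivative, sub_sub_cancel]

theorem eElt_mul_derElt_pow_smul (j : ℕ) (q : K[X]) :
    (eElt K * derElt K ^ j) • q = C ((j.factorial : K) * q.coeff j) := by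
  rw [mul_smul, derElt_pow_smul, eElt_smul, coeff_iterate_derivative, zero_add,
    Nat.descFactorial_self, nsmul_eq_mul]

theorem eq_zero_of_forall_mem_Fideal_smul_eq_zero {p : K[X]}
    (h : ∀ r ∈ Fideal K, r • p = 0) : p = 0 := by
  ext j
  have hr : eElt K * derElt K ^ j ∈ Fideal K :=
    Ideal.subset_span ⟨1, derElt K ^ j, by rw [one_mul]⟩
  have hj := h _ hr
  rw [eElt_mul_derElt_pow_smul, C_eq_zero] at hj
  simpa [Nat.factorial_ne_zero] using hj

end IntegroDifferential

theorem stmt_12_general (K : Type) [Field K] [CharZero K] (n : ℕ) (lam : K) :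
    ∀ f : Mmod K n lam →ₗ[I1 K] Polynomial K, f = 0 := fun f =>
  Submodule.linearMap_eq_zero_of_apply_mkQ_one <| eq_zero_of_forall_mem_Fideal_smul_eq_zero
    fun _ hr => Submodule.smul_apply_mkQ_one_eq_zero f (le_sup_left (a := Fideal K) hr)

/-- For every integer `n ≥ 1` and every `λ ∈ K`,
`Hom_{I₁}(M(n,λ), K[x]) = 0`. -/
theorem stmt_12 (K : Type) [Field K] [CharZero K] (n : ℕ) (hn : 1 ≤ n) (lam : K) :
    ∀ f : Mmod K n lam →ₗ[I1 K] Polynomial K, f = 0 :=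
  stmt_12_general K n lam
end

section
/- For every integer n ≥ 1 and every λ ∈ K, Hom_{I₁}(K[x], M(n,λ)) = 0, i.e., the only I₁-module homomorphism from K[x] to M(n,λ) is the zero map. -/
open Polynomial

set_option synthInstance.maxHeartbeats 1000000
set_option maxHeartbeats 1000000

namespace I1

variable {K : Type} [Field K] [CharZero K]

lemma smul_poly_def (a : I1 K) (p : K[X]) : a • p = (a : Module.End K K[X]) p := rfl

noncomputable def xElt (K : Type) [Field K] [CharZero K] : I1 K :=
  ⟨xOp K, Algebra.subset_adjoin (by simp)⟩

lemma aeval_xElt_smul_one (p : K[X]) : aeval (xElt K) p • (1 : K[X]) = p := by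
  have hx : xOp K = Algebra.lmul K K[X] X := LinearMap.ext fun q => rfl
  have hcoe : (aeval (xElt K) p : Module.End K K[X]) = aeval (xOp K) p :=
    (aeval_algHom_apply (I1 K).val (xElt K) p).symm
  rw [smul_poly_def, hcoe, hx, aeval_algHom_apply, aeval_X_left_apply,
    Algebra.coe_lmul_eq_mul, LinearMap.mul_apply', mul_one]

lemma span_one_eq_top : Submodule.span (I1 K) {(1 : K[X])} = ⊤ :=
  Submodule.eq_top_iff'.2 fun p =>
    aeval_xElt_smul_one p ▸ Submodule.smul_mem _ _ (Submodule.mem_span_singleton_self _)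

lemma eElt_smul_one : eElt K • (1 : K[X]) = 1 := by
  show (1 : K[X]) - intOp K (derivative 1) = 1
  rw [derivative_one, map_zero, sub_zero]

lemma eElt_mul_mem_Fideal (c : I1 K) : eElt K * c ∈ Fideal K :=
  Ideal.subset_span ⟨1, c, by rw [one_mul]⟩

lemma eElt_smul_quotient_eq_zero {I : Ideal (I1 K)} (hI : Fideal K ≤ I) (m : I1 K ⧸ I) :
    eElt K • m = 0 := by
  obtain ⟨c, rfl⟩ := Submodule.Quotient.mk_surjective _ m
  exact (Submodule.Quotient.mk_eq_zero I).2 (hI (eElt_mul_mem_Fideal c))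

/-- `K[x]` is cyclic on `1` and `1 - ∫∂` fixes `1`, so it maps to zero in any module killed by
`1 - ∫∂`. -/
lemma linearMap_eq_zero_of_eElt_smul_eq_zero {M : Type*} [AddCommGroup M] [Module (I1 K) M]
    (hM : ∀ m : M, eElt K • m = 0) (f : K[X] →ₗ[I1 K] M) : f = 0 := by
  refine LinearMap.ext_on span_one_eq_top ?_
  rintro _ rfl
  rw [← eElt_smul_one, map_smul, hM, LinearMap.zero_apply]

end I1

theorem stmt_13_general (K : Type) [Field K] [CharZero K] (n : ℕ) (lam : K) :
    ∀ f : Polynomial K →ₗ[I1 K] Mmod K n lam, f = 0 :=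
  I1.linearMap_eq_zero_of_eElt_smul_eq_zero
    (I1.eElt_smul_quotient_eq_zero le_sup_left)

/-- For every integer `n ≥ 1` and every `λ ∈ K`,
`Hom_{I₁}(K[x], M(n,λ)) = 0`. -/
theorem stmt_13 (K : Type) [Field K] [CharZero K] (n : ℕ) (hn : 1 ≤ n) (lam : K) :
    ∀ f : Polynomial K →ₗ[I1 K] Mmod K n lam, f = 0 :=
  stmt_13_general K n lam
end

section
/- Let n, m ≥ 1 be integers and λ, μ ∈ K with λ − μ ∉ ℤ. Then every short exact sequence of I₁-modules 0 → M(m,μ) → L → M(n,λ) → 0 splits; that is, Ext¹_{I₁}(M(n,λ), M(m,μ)) = 0. -/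
open Polynomial

set_option synthInstance.maxHeartbeats 1000000
set_option maxHeartbeats 1000000

/-!
Since `1 - ∫∂` is idempotent and kills both `M(m,μ)` and `M(n,λ)`, it kills every extension `L`,
and so does `F`. A lift `ℓ ∈ L` of the generator of `M(n,λ)` therefore only has to be corrected
so that `(H-λ)^n ℓ = 0`, and that correction lives in `M(m,μ)`. There `(H-λ)^n` acts surjectively:
every word `w` in `x, ∂, ∫` shifts `H` by an integer `d`, so the image of `w` in `M(m,μ)` is killed
by `(H-μ-d)^m`, and `(X-μ-d)^m` is coprime to `(X-λ)^n` because `λ - μ ∉ ℤ`.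
-/

section General

variable {R : Type*} [Ring R]

theorem IsIdempotentElem.mem_annihilator_of_exact {N L Q : Type*} [AddCommGroup N] [Module R N]
    [AddCommGroup L] [Module R L] [AddCommGroup Q] [Module R Q] {e : R} (he : IsIdempotentElem e)
    {f : N →ₗ[R] L} {g : L →ₗ[R] Q} (hfg : LinearMap.range f = LinearMap.ker g)
    (heN : e ∈ Module.annihilator R N) (heQ : e ∈ Module.annihilator R Q) :
    e ∈ Module.annihilator R L := by
  refine Module.mem_annihilator.mpr fun y => ?_
  obtain ⟨z, hz⟩ : e • y ∈ LinearMap.range f := by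
    rw [hfg, LinearMap.mem_ker, map_smul, Module.mem_annihilator.mp heQ]
  rw [← he.eq, mul_smul, ← hz, ← map_smul, Module.mem_annihilator.mp heN, map_zero]

theorem span_mul_mul_le_annihilator {M : Type*} [AddCommGroup M] [Module R M] {e : R}
    (he : e ∈ Module.annihilator R M) :
    Ideal.span {y | ∃ a b : R, y = a * e * b} ≤ Module.annihilator R M := by
  rw [Ideal.span_le]
  rintro _ ⟨a, b, rfl⟩
  exact Ideal.mul_mem_right b _ (Ideal.mul_mem_left _ a he)

theorem exists_comp_eq_id_of_apply_eq_mk_one {L : Type*} [AddCommGroup L] [Module R L]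
    (I : Ideal R) (g : L →ₗ[R] R ⧸ I) (ℓ : L) (hℓ : g ℓ = Submodule.Quotient.mk 1)
    (hI : I ≤ LinearMap.ker (LinearMap.toSpanSingleton R L ℓ)) :
    ∃ h : R ⧸ I →ₗ[R] L, g.comp h = LinearMap.id :=
  ⟨I.liftQ _ hI, Submodule.linearMap_qext _ (LinearMap.ext_ring (by simpa using hℓ))⟩

variable {K : Type*} [Field K] [Algebra K R]

theorem exists_pow_smul_eq_of_pow_smul_eq_zero {M : Type*} [AddCommGroup M] [Module R M]
    (h : R) {lam nu : K} (hne : lam ≠ nu) (n m : ℕ) {x : M}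
    (hx : (h - algebraMap K R nu) ^ m • x = 0) : ∃ y : M, (h - algebraMap K R lam) ^ n • y = x := by
  obtain ⟨u, v, huv⟩ : IsCoprime ((X - C nu) ^ m) ((X - C lam) ^ n) :=
    (isCoprime_X_sub_C_of_isUnit_sub (sub_ne_zero.mpr hne.symm).isUnit).pow
  refine ⟨aeval h v • x, ?_⟩
  calc (h - algebraMap K R lam) ^ n • aeval h v • x
      = aeval h (v * (X - C lam) ^ n) • x := by
        rw [mul_comm, map_mul, mul_smul]; simp
    _ = x := by
        rw [show v * (X - C lam) ^ n = 1 - u * (X - C nu) ^ m by linear_combination huv]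
        simp [sub_smul, mul_smul, hx]

end General

section Operators

variable (K : Type) [Field K]

lemma semiconjBy_xOp : SemiconjBy (xOp K) (derOp K * xOp K + 1) (derOp K * xOp K) := by
  refine LinearMap.ext fun p => ?_
  simp only [xOp, derOp, Module.End.mul_apply, LinearMap.add_apply, LinearMap.mulLeft_apply,
    derivative_mul, derivative_X, one_mul, Module.End.one_apply]
  ring

lemma semiconjBy_derOp :
    SemiconjBy (derOp K) (derOp K * xOp K + (-1 : ℤ)) (derOp K * xOp K) := by
  refine LinearMap.ext fun p => ?_
  simp [xOp, derOp, derivative_mul]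

variable [CharZero K]

lemma intOp_monomial (k : ℕ) (a : K) :
    intOp K (monomial k a) = ((k : K) + 1)⁻¹ • monomial (k + 1) a := by
  simp [intOp, lsum_apply, sum_monomial_index]

lemma derOp_mul_intOp : derOp K * intOp K = 1 := by
  refine Polynomial.lhom_ext' fun k => LinearMap.ext fun a => ?_
  have hk : ((k : K) + 1) ≠ 0 := Nat.cast_add_one_ne_zero k
  simp only [derOp, LinearMap.coe_comp, Function.comp_apply, Module.End.mul_apply, intOp_monomial,
    smul_monomial, smul_eq_mul, derivative_monomial_succ, Module.End.one_apply]
  field_simp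

lemma semiconjBy_intOp : SemiconjBy (intOp K) (derOp K * xOp K + 1) (derOp K * xOp K) := by
  refine Polynomial.lhom_ext' fun k => LinearMap.ext fun a => ?_
  have hk : ((k : K) + 1) ≠ 0 := Nat.cast_add_one_ne_zero k
  simp only [derOp, xOp, LinearMap.coe_comp, Function.comp_apply, Module.End.mul_apply,
    LinearMap.add_apply, LinearMap.mulLeft_apply, X_mul_monomial, derivative_monomial_succ,
    Module.End.one_apply, ← map_add, intOp_monomial, smul_monomial, smul_eq_mul, Nat.cast_add,
    Nat.cast_one]
  field_simp

end Operators

section IntegroDifferential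

variable (K : Type) [Field K] [CharZero K]

@[simp]
lemma coe_Hop : (Hop K : Module.End K K[X]) = derOp K * xOp K := rfl

lemma eElt_isIdempotentElem : IsIdempotentElem (eElt K) := by
  have hproj : IsIdempotentElem (intOp K * derOp K) := by
    rw [IsIdempotentElem, mul_assoc, ← mul_assoc (derOp K), derOp_mul_intOp, one_mul]
  exact Subtype.ext hproj.one_sub

lemma exists_semiconjBy_Hop_of_mem_closure {w : I1 K}
    (hw : w ∈ Submonoid.closure (((↑) : I1 K → Module.End K K[X]) ⁻¹' {xOp K, derOp K, intOp K})) :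
    ∃ d : ℤ, SemiconjBy w (Hop K + d) (Hop K) := by
  induction hw using Submonoid.closure_induction with
  | one => exact ⟨0, by simp⟩
  | mem w hw =>
    simp only [Set.mem_preimage, Set.mem_insert_iff, Set.mem_singleton_iff] at hw
    rcases hw with h | h | h
    · exact ⟨1, Subtype.ext (by simpa [SemiconjBy, h] using semiconjBy_xOp K)⟩
    · exact ⟨-1, Subtype.ext (by simpa [SemiconjBy, h] using semiconjBy_derOp K)⟩
    · exact ⟨1, Subtype.ext (by simpa [SemiconjBy, h] using semiconjBy_intOp K)⟩
  | mul w₁ w₂ _ _ ih₁ ih₂ =>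
    obtain ⟨d₁, h₁⟩ := ih₁
    obtain ⟨d₂, h₂⟩ := ih₂
    refine ⟨d₁ + d₂, h₁.mul_left ?_⟩
    simpa [add_assoc, add_comm (d₂ : I1 K)] using h₂.add_right (Int.cast_commute d₁ w₂).symm

end IntegroDifferential

section Mmod

variable (K : Type) [Field K] [CharZero K]

lemma eElt_mem_annihilator_Mmod (n : ℕ) (lam : K) :
    eElt K ∈ Module.annihilator (I1 K) (Mmod K n lam) := by
  refine Module.mem_annihilator.mpr fun z => ?_
  obtain ⟨a, rfl⟩ := Submodule.Quotient.mk_surjective _ z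
  rw [← Submodule.Quotient.mk_smul, smul_eq_mul, Submodule.Quotient.mk_eq_zero]
  exact Submodule.mem_sup_left (Ideal.subset_span ⟨1, a, by rw [one_mul]⟩)

lemma surjective_Hop_sub_pow_smul_Mmod {lam mu : K} (hZ : ¬ ∃ k : ℤ, lam - mu = (k : K))
    (n m : ℕ) :
    Function.Surjective fun y : Mmod K m mu => (Hop K - algebraMap K (I1 K) lam) ^ n • y := by
  let φ := DistribSMul.toLinearMap K (Mmod K m mu) ((Hop K - algebraMap K (I1 K) lam) ^ n)
  intro z
  suffices ⊤ ≤ (LinearMap.range φ).comap ((Msub K m mu).mkQ.restrictScalars K) by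
    obtain ⟨a, rfl⟩ := Submodule.Quotient.mk_surjective _ z
    exact this Submodule.mem_top
  have hgen : Algebra.adjoin K (((↑) : I1 K → Module.End K K[X]) ⁻¹' {xOp K, derOp K, intOp K})
      = ⊤ := Algebra.adjoin_adjoin_coe_preimage
  rw [← Algebra.top_toSubmodule, ← hgen, Algebra.adjoin_eq_span, Submodule.span_le]
  intro w hw
  obtain ⟨d, hd⟩ := exists_semiconjBy_Hop_of_mem_closure K hw
  have hne : lam ≠ mu + d := fun h => hZ ⟨d, by rw [h]; ring⟩
  refine exists_pow_smul_eq_of_pow_smul_eq_zero (Hop K) hne n m ?_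
  have hshift : (Hop K - algebraMap K (I1 K) (mu + d)) ^ m * w
      = w * (Hop K - algebraMap K (I1 K) mu) ^ m := by
    convert ((hd.sub_right (Algebra.commute_algebraMap_right (mu + d) w)).pow_right m).eq.symm
      using 3
    simp only [map_add, map_intCast]
    abel
  simp only [LinearMap.restrictScalars_apply, Submodule.mkQ_apply, ← Submodule.Quotient.mk_smul,
    smul_eq_mul, hshift, Submodule.Quotient.mk_eq_zero]
  exact Submodule.mem_sup_right (Ideal.mul_mem_left _ w (Ideal.mem_span_singleton_self _))

end Mmod

theorem stmt_17_general (K : Type) [Field K] [CharZero K] (n m : ℕ)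
    (lam mu : K) (hZ : ¬ ∃ k : ℤ, lam - mu = (k : K))
    (L : Type) [AddCommGroup L] [Module (I1 K) L]
    (f : Mmod K m mu →ₗ[I1 K] L) (g : L →ₗ[I1 K] Mmod K n lam)
    (hg : Function.Surjective g)
    (hfg : LinearMap.range f = LinearMap.ker g) :
    ∃ h : Mmod K n lam →ₗ[I1 K] L, g.comp h = LinearMap.id := by
  set P := (Hop K - algebraMap K (I1 K) lam) ^ n
  have hFL : Fideal K ≤ Module.annihilator (I1 K) L :=
    span_mul_mul_le_annihilator <| (eElt_isIdempotentElem K).mem_annihilator_of_exact hfg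
      (eElt_mem_annihilator_Mmod K m mu) (eElt_mem_annihilator_Mmod K n lam)
  obtain ⟨ℓ, hℓ⟩ := hg (Submodule.Quotient.mk 1)
  obtain ⟨u, hu⟩ : P • ℓ ∈ LinearMap.range f := by
    rw [hfg, LinearMap.mem_ker, map_smul, hℓ, ← Submodule.Quotient.mk_smul,
      Submodule.Quotient.mk_eq_zero, smul_eq_mul, mul_one]
    exact Submodule.mem_sup_right (Ideal.mem_span_singleton_self _)
  obtain ⟨w, rfl⟩ := surjective_Hop_sub_pow_smul_Mmod K hZ n m u
  refine exists_comp_eq_id_of_apply_eq_mk_one _ g (ℓ - f w) ?_ (sup_le ?_ ?_)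
  · rw [map_sub, hℓ, LinearMap.mem_ker.mp (hfg ▸ LinearMap.mem_range_self f w), sub_zero]
  · exact fun s hs => Module.mem_annihilator.mp (hFL hs) _
  · rw [Ideal.span_le, Set.singleton_subset_iff]
    simp [P, smul_sub, ← map_smul, hu]

/-- Let `n, m ≥ 1` and `λ, μ ∈ K` with `λ - μ ∉ ℤ`. Then every short exact
sequence of `I₁`-modules `0 → M(m,μ) → L → M(n,λ) → 0` splits; that is,
`Ext¹(M(n,λ), M(m,μ)) = 0`. -/
theorem stmt_17 (K : Type) [Field K] [CharZero K] (n m : ℕ) (hn : 1 ≤ n) (hm : 1 ≤ m)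
    (lam mu : K) (hZ : ¬ ∃ k : ℤ, lam - mu = (k : K))
    (L : Type) [AddCommGroup L] [Module (I1 K) L]
    (f : Mmod K m mu →ₗ[I1 K] L) (g : L →ₗ[I1 K] Mmod K n lam)
    (hf : Function.Injective f) (hg : Function.Surjective g)
    (hfg : LinearMap.range f = LinearMap.ker g) :
    ∃ h : Mmod K n lam →ₗ[I1 K] L, g.comp h = LinearMap.id :=
  stmt_17_general K n m lam mu hZ L f g hg hfg
end
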